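/- Let c1, c2 > 0 be real numbers. (i) If c2 ≠ 4c1, then setting α := c1 and β := c1·c2/(4c1 − c2), the numbers α, β are nonzero, the symmetric bilinear form Q on g = l × k defined by Q((u,v),(u',v')) := α⟨u,u'⟩ + β⟨v,v'⟩ is ad(g)-invariant and nondegenerate, the Q-orthogonal complement p of h in g satisfies g = h ⊕ p, the projection π of g onto m along h restricts to a linear bijection from p onto m, and Q(w,w') = g_{c1,c2}(π(w), π(w')) for all w, w' ∈ p. (ii) If c2 = 4c1, then q := (m1 ⊕ k) × {0} is a linear complement to h in g that is invariant under ad(Z) for every Z ∈ h, the projection π of g onto m along h restricts to a linear bijection from q onto m, and c1⟨u,u'⟩ = g_{c1,c2}(π((u,0)), π((u',0))) for all u, u' ∈ m1 ⊕ k ⊆ l. -/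

import Mathlib

/-! Context: `l` is a compact simple real Lie algebra with `⟨x,y⟩ = −B_l(x,y)`;
`k`, `k1` are Lie subalgebras of `l` with `[k,k1] = 0`, `⟨k,k1⟩ = 0` and
`k ⊕ k1` a Lie subalgebra of `l`; `m1` is the orthogonal complement of `k ⊕ k1`
in `l`; `g = l × k`, `h = {(X+W, X) : X ∈ k, W ∈ k1}`, `m2 = {(X,−X) : X ∈ k}`,
`m = (m1 × {0}) ⊕ m2`. -/

/-- Componentwise Lie ring structure on a product. -/
instance prodLieRing {L M : Type*} [LieRing L] [LieRing M] : LieRing (L × M) where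
  bracket p q := (⁅p.1, q.1⁆, ⁅p.2, q.2⁆)
  add_lie p q r := by
    show (⁅p.1 + q.1, r.1⁆, ⁅p.2 + q.2, r.2⁆)
        = (⁅p.1, r.1⁆, ⁅p.2, r.2⁆) + (⁅q.1, r.1⁆, ⁅q.2, r.2⁆)
    simp [add_lie, Prod.mk_add_mk]
  lie_add p q r := by
    show (⁅p.1, q.1 + r.1⁆, ⁅p.2, q.2 + r.2⁆)
        = (⁅p.1, q.1⁆, ⁅p.2, q.2⁆) + (⁅p.1, r.1⁆, ⁅p.2, r.2⁆)
    simp [lie_add, Prod.mk_add_mk]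
  lie_self p := by
    show (⁅p.1, p.1⁆, ⁅p.2, p.2⁆) = (0 : L × M)
    simp
  leibniz_lie p q r := by
    show (⁅p.1, ⁅q.1, r.1⁆⁆, ⁅p.2, ⁅q.2, r.2⁆⁆)
        = (⁅⁅p.1, q.1⁆, r.1⁆, ⁅⁅p.2, q.2⁆, r.2⁆) + (⁅q.1, ⁅p.1, r.1⁆⁆, ⁅q.2, ⁅p.2, r.2⁆⁆)
    simp [Prod.mk_add_mk]

/-- Componentwise Lie algebra structure on a product. -/
instance prodLieAlgebra {R : Type*} [CommRing R] {L M : Type*} [LieRing L] [LieRing M]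
    [LieAlgebra R L] [LieAlgebra R M] : LieAlgebra R (L × M) where
  lie_smul t p q := by
    show (⁅p.1, (t • q).1⁆, ⁅p.2, (t • q).2⁆) = t • (⁅p.1, q.1⁆, ⁅p.2, q.2⁆)
    simp [Prod.smul_mk]

variable {l : Type*} [LieRing l] [LieAlgebra ℝ l] [FiniteDimensional ℝ l]

/-- `⟨x, y⟩ := −B_l(x, y)`, the negative of the Killing form, as a bilinear form. -/
noncomputable def negKilling (l : Type*) [LieRing l] [LieAlgebra ℝ l] :
    LinearMap.BilinForm ℝ l :=
  -(killingForm ℝ l)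

/-- `m1`: the `⟨·,·⟩`-orthogonal complement of `k ⊕ k1` in `l`. -/
noncomputable def mOne (k k1 : LieSubalgebra ℝ l) : Submodule ℝ l :=
  (k.toSubmodule ⊔ k1.toSubmodule).orthogonalBilin (negKilling l)

/-- `h = {(X + W, X) : X ∈ k, W ∈ k1} ⊆ g = l × k`. -/
def hSub (k k1 : LieSubalgebra ℝ l) : Submodule ℝ (l × k) where
  carrier := {p | ∃ (X : k) (W : k1), p = ((X : l) + (W : l), X)}
  add_mem' := by
    rintro p q ⟨X, W, rfl⟩ ⟨X', W', rfl⟩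
    exact ⟨X + X', W + W', by simp [Prod.ext_iff]; abel⟩
  zero_mem' := ⟨0, 0, by simp [Prod.ext_iff]⟩
  smul_mem' := by
    rintro c p ⟨X, W, rfl⟩
    refine ⟨c • X, c • W, ?_⟩
    simp only [Prod.smul_mk, Prod.mk.injEq]
    exact ⟨smul_add c _ _, trivial⟩

/-- `m2 = {(X, −X) : X ∈ k} ⊆ g = l × k`. -/
def mTwo (k : LieSubalgebra ℝ l) : Submodule ℝ (l × k) where
  carrier := {p | ∃ X : k, p = ((X : l), -X)}
  add_mem' := by
    rintro p q ⟨X, rfl⟩ ⟨X', rfl⟩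
    exact ⟨X + X', by simp [Prod.ext_iff]; abel⟩
  zero_mem' := ⟨0, by simp [Prod.ext_iff]⟩
  smul_mem' := by
    rintro c p ⟨X, rfl⟩
    refine ⟨c • X, ?_⟩
    simp only [Prod.smul_mk, Prod.mk.injEq, smul_neg]
    exact ⟨rfl, trivial⟩

/-- `m = (m1 × {0}) ⊕ m2 ⊆ g = l × k`. -/
noncomputable def mSub (k k1 : LieSubalgebra ℝ l) : Submodule ℝ (l × k) :=
  (mOne k k1).prod (⊥ : Submodule ℝ k) ⊔ mTwo k

/-- The bi-invariant form `Q((u,v),(u',v')) = α⟨u,u'⟩ + β⟨v,v'⟩` on `g = l × k`. -/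
noncomputable def qForm (k : LieSubalgebra ℝ l) (α β : ℝ) :
    LinearMap.BilinForm ℝ (l × k) :=
  α • (negKilling l).comp (LinearMap.fst ℝ l k) (LinearMap.fst ℝ l k) +
    β • (negKilling l).comp (k.incl.toLinearMap.comp (LinearMap.snd ℝ l k))
      (k.incl.toLinearMap.comp (LinearMap.snd ℝ l k))

/-!
On `h` the form is `Q((X + W, X), (X' + W', X')) = (α + β)⟨X, X'⟩ + α⟨W, W'⟩`, and
`α + β = 4 c1² / (4 c1 - c2) ≠ 0`, so `Q` is nondegenerate on `h` and its orthogonal `p` is a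
complement of `h`. Solving the orthogonality conditions in `l = m1 ⊕ k ⊕ k1` gives
`p = {(U + t V, V) : U ∈ m1, V ∈ k}` with `t = -β/α`; when `c2 = 4 c1` (the limit `t → ∞`) the
complement `q` takes its place. Any complement of `h` is carried bijectively onto `m` by the
projection along `h`, and the projection is explicit: `π(U + X, Y) = (U + Z, -Z)` with
`Z = (X - Y)/2`. The metric identities then reduce to `α t² + β = c2 ((t - 1)/2)²`, resp. to
`c2 / 4 = c1`, because `m1 ⊥ k`.
-/

namespace LinearMap.BilinForm

variable {R M : Type*} [CommSemiring R] [AddCommMonoid M] [Module R M]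

theorem disjoint_of_forall_apply_eq_zero {B : LinearMap.BilinForm R M} (hB : ∀ x, B x x = 0 → x = 0)
    {S T : Submodule R M} (hST : ∀ x ∈ S, ∀ y ∈ T, B x y = 0) : Disjoint S T :=
  Submodule.disjoint_def.2 fun x hxS hxT => hB x (hST x hxS x hxT)

end LinearMap.BilinForm

section Projection

variable {R V : Type*} [Ring R] [AddCommGroup V] [Module R V] {H M C : Submodule R V}
  {π : V → V}

theorem projection_eq_of_sub_mem (hπ : ∀ w, π w ∈ M ∧ w - π w ∈ H) (hHM : Disjoint H M)
    {w v : V} (hv : v ∈ M) (hwv : w - v ∈ H) : π w = v := by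
  have hH : π w - v ∈ H := by simpa using H.sub_mem hwv (hπ w).2
  exact sub_eq_zero.1 (Submodule.disjoint_def.1 hHM _ hH (M.sub_mem (hπ w).1 hv))

theorem projection_bijOn_of_isCompl (hπ : ∀ w, π w ∈ M ∧ w - π w ∈ H) (hHM : Disjoint H M)
    (hHC : IsCompl H C) : Set.BijOn π C M := by
  refine ⟨fun w _ => (hπ w).1, fun w hw w' hw' hww' => ?_, fun v hv => ?_⟩
  · have hH : w - w' ∈ H := by simpa [hww'] using H.sub_mem (hπ w).2 (hπ w').2
    exact sub_eq_zero.1 (Submodule.disjoint_def.1 hHC.disjoint _ hH (C.sub_mem hw hw'))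
  · have hv' : v ∈ H ⊔ C := hHC.sup_eq_top ▸ Submodule.mem_top
    obtain ⟨h, hh, c, hc, rfl⟩ := Submodule.mem_sup.1 hv'
    exact ⟨c, hc, projection_eq_of_sub_mem hπ hHM hv (by simpa using H.neg_mem hh)⟩

end Projection

section NegKilling

variable {L : Type*} [LieRing L] [LieAlgebra ℝ L]

theorem negKilling_apply (x y : L) : negKilling L x y = -killingForm ℝ L x y := rfl

theorem negKilling_comm (x y : L) : negKilling L x y = negKilling L y x := by
  rw [negKilling_apply, negKilling_apply, LieModule.traceForm_comm]

theorem negKilling_isRefl : (negKilling L).IsRefl := fun x y h => by rwa [negKilling_comm]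

theorem negKilling_lie_apply (x y z : L) : negKilling L ⁅x, y⁆ z = negKilling L x ⁅y, z⁆ := by
  rw [negKilling_apply, negKilling_apply, LieModule.traceForm_apply_lie_apply]

theorem negKilling_lie_apply' (x y z : L) : negKilling L ⁅x, y⁆ z = -negKilling L y ⁅x, z⁆ := by
  rw [← lie_skew, map_neg, LinearMap.neg_apply, negKilling_lie_apply]

theorem eq_zero_of_negKilling_self_eq_zero (hneg : ∀ x : L, x ≠ 0 → killingForm ℝ L x x < 0) {x : L}
    (hx : negKilling L x x = 0) : x = 0 := by
  by_contra h
  linarith [hneg x h, neg_eq_zero.1 hx]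

end NegKilling

section Decomposition

variable {L : Type*} [LieRing L] [LieAlgebra ℝ L] {k k1 : LieSubalgebra ℝ L}

theorem isCompl_sup_mOne [FiniteDimensional ℝ L] (hB : ∀ x : L, negKilling L x x = 0 → x = 0) :
    IsCompl (k.toSubmodule ⊔ k1.toSubmodule) (mOne k k1) :=
  (LinearMap.BilinForm.isCompl_orthogonal_iff_disjoint negKilling_isRefl).2 <|
    LinearMap.BilinForm.disjoint_of_forall_apply_eq_zero hB fun _ hx _ hy => hy _ hx

theorem exists_eq_mOne_add [FiniteDimensional ℝ L] (hB : ∀ x : L, negKilling L x x = 0 → x = 0)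
    (x : L) : ∃ a ∈ mOne k k1, ∃ (X : k) (W : k1), x = a + (X + W) := by
  have hx : x ∈ k.toSubmodule ⊔ k1.toSubmodule ⊔ mOne k k1 :=
    (isCompl_sup_mOne hB).sup_eq_top ▸ Submodule.mem_top
  obtain ⟨n, hn, a, ha, rfl⟩ := Submodule.mem_sup.1 hx
  obtain ⟨X, hX, W, hW, rfl⟩ := Submodule.mem_sup.1 hn
  exact ⟨a, ha, ⟨X, hX⟩, ⟨W, hW⟩, add_comm _ _⟩

theorem negKilling_mOne_eq_zero {a n : L} (ha : a ∈ mOne k k1)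
    (hn : n ∈ k.toSubmodule ⊔ k1.toSubmodule) : negKilling L a n = 0 := by
  rw [negKilling_comm]; exact ha n hn

theorem lie_mem_mOne
    (hsum : ∀ x y : L, x ∈ k.toSubmodule ⊔ k1.toSubmodule →
      y ∈ k.toSubmodule ⊔ k1.toSubmodule → ⁅x, y⁆ ∈ k.toSubmodule ⊔ k1.toSubmodule)
    {z a : L} (hz : z ∈ k.toSubmodule ⊔ k1.toSubmodule) (ha : a ∈ mOne k k1) :
    ⁅z, a⁆ ∈ mOne k k1 := fun n hn => by
  rw [← negKilling_lie_apply]; exact ha _ (hsum n z hn hz)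

theorem mem_mSub {p : L × k} : p ∈ mSub k k1 ↔ ∃ U ∈ mOne k k1, ∃ Y : k, p = (U + Y, -Y) := by
  constructor
  · intro hp
    obtain ⟨a, ha, b, ⟨Y, rfl⟩, rfl⟩ := Submodule.mem_sup.1 hp
    obtain ⟨ha1, ha2 : a.2 = 0⟩ := Submodule.mem_prod.1 ha
    exact ⟨a.1, ha1, Y, by ext <;> simp [ha2]⟩
  · rintro ⟨U, hU, Y, rfl⟩
    have hsplit : ((U + Y, -Y) : L × k) = (U, 0) + ((Y : L), -Y) := by ext <;> simp
    rw [hsplit]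
    exact Submodule.add_mem_sup (Submodule.mem_prod.2 ⟨hU, rfl⟩) ⟨Y, rfl⟩

theorem disjoint_hSub_mSub (hB : ∀ x : L, negKilling L x x = 0 → x = 0)
    (horth : ∀ x ∈ k, ∀ y ∈ k1, negKilling L x y = 0) : Disjoint (hSub k k1) (mSub k k1) := by
  rw [Submodule.disjoint_def]
  rintro _ ⟨X, W, rfl⟩ hm
  obtain ⟨U, hU, Y, h⟩ := mem_mSub.1 hm
  obtain ⟨h1, h2⟩ := Prod.ext_iff.1 h
  simp only at h1 h2
  have hYX : (Y : L) = -X := by simp [h2]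
  rw [hYX] at h1
  have hUs : U ∈ k.toSubmodule ⊔ k1.toSubmodule := by
    have hU' : U = (2 : ℝ) • (X : L) + W := by linear_combination (norm := module) -h1
    exact hU' ▸ Submodule.add_mem_sup (k.toSubmodule.smul_mem _ X.2) W.2
  have hU0 : U = 0 := hB U (hU U hUs)
  have h2X : (2 : ℝ) • (X : L) = -W := by linear_combination (norm := module) h1 + hU0
  have hX : (X : L) = 0 := by
    have hkk1 := LinearMap.BilinForm.disjoint_of_forall_apply_eq_zero hB horth
    have := Submodule.disjoint_def'.1 hkk1 _ (k.toSubmodule.smul_mem (2 : ℝ) X.2) _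
      (k1.toSubmodule.neg_mem W.2) h2X
    exact (smul_eq_zero.1 this).resolve_left two_ne_zero
  have hW : (W : L) = 0 := by simpa [hX] using h2X
  ext <;> simp [hX, hW]

theorem projection_mOne_add (hB : ∀ x : L, negKilling L x x = 0 → x = 0)
    (horth : ∀ x ∈ k, ∀ y ∈ k1, negKilling L x y = 0) {π : L × k → L × k}
    (hπ : ∀ w, π w ∈ mSub k k1 ∧ w - π w ∈ hSub k k1) {U : L} (hU : U ∈ mOne k k1) (X Y : k) :
    π (U + X, Y) = (U + ((2 : ℝ)⁻¹ • (X - Y) : k), -((2 : ℝ)⁻¹ • (X - Y))) := by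
  set Z : k := (2 : ℝ)⁻¹ • (X - Y) with hZ
  refine projection_eq_of_sub_mem hπ (disjoint_hSub_mSub hB horth)
    (mem_mSub.2 ⟨U, hU, Z, rfl⟩) ⟨Y + Z, 0, ?_⟩
  have hX : X = Y + Z + Z := by rw [hZ]; module
  ext <;> simp [hX]

end Decomposition

section QForm

variable {L : Type*} [LieRing L] [LieAlgebra ℝ L] {k k1 : LieSubalgebra ℝ L} {α β : ℝ}

theorem qForm_apply (p q : L × k) :
    qForm k α β p q = α * negKilling L p.1 q.1 + β * negKilling L p.2 q.2 := rfl

theorem qForm_isRefl : (qForm k α β).IsRefl := fun p q h => by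
  rwa [qForm_apply, negKilling_comm, negKilling_comm (q.2 : L), ← qForm_apply]

theorem qForm_lie_apply_add (z w v : L × k) :
    qForm k α β ⁅z, w⁆ v + qForm k α β w ⁅z, v⁆ = 0 := by
  have h1 := negKilling_lie_apply' z.1 w.1 v.1
  have h2 := negKilling_lie_apply' (z.2 : L) w.2 v.2
  change α * negKilling L ⁅z.1, w.1⁆ v.1 + β * negKilling L ⁅(z.2 : L), w.2⁆ v.2 +
    (α * negKilling L w.1 ⁅z.1, v.1⁆ + β * negKilling L w.2 ⁅(z.2 : L), v.2⁆) = 0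
  linear_combination α * h1 + β * h2

theorem qForm_nondegenerate (hB : ∀ x : L, negKilling L x x = 0 → x = 0) (hα : α ≠ 0)
    (hβ : β ≠ 0) (w : L × k) (hw : ∀ v, qForm k α β w v = 0) : w = 0 := by
  have h1 : α * negKilling L w.1 w.1 = 0 := by simpa [qForm_apply] using hw (w.1, 0)
  have h2 : β * negKilling L w.2 w.2 = 0 := by simpa [qForm_apply] using hw (0, w.2)
  ext
  · exact hB _ ((mul_eq_zero.1 h1).resolve_left hα)
  · exact hB _ ((mul_eq_zero.1 h2).resolve_left hβ)

theorem disjoint_hSub_orthogonal (hB : ∀ x : L, negKilling L x x = 0 → x = 0)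
    (horth : ∀ x ∈ k, ∀ y ∈ k1, negKilling L x y = 0) (hα : α ≠ 0) (hαβ : α + β ≠ 0) :
    Disjoint (hSub k k1) ((hSub k k1).orthogonalBilin (qForm k α β)) := by
  rw [Submodule.disjoint_def]
  rintro _ ⟨X, W, rfl⟩ hp
  have hWX : negKilling L W X = 0 := by rw [negKilling_comm]; exact horth _ X.2 _ W.2
  have hW : (W : L) = 0 := by
    have h := hp ((0 : k) + (W : L), 0) ⟨0, W, rfl⟩
    simp only [qForm_apply, ZeroMemClass.coe_zero, zero_add, map_add, hWX, map_zero,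
      LinearMap.zero_apply, mul_zero, add_zero] at h
    exact hB _ ((mul_eq_zero.1 h).resolve_left hα)
  have hX : (X : L) = 0 := by
    have h := hp ((X : L) + (0 : k1), X) ⟨X, 0, rfl⟩
    simp only [qForm_apply, ZeroMemClass.coe_zero, add_zero, hW] at h
    exact hB _ ((mul_eq_zero.1 (by linear_combination h)).resolve_left hαβ)
  ext <;> simp [hX, hW]

theorem isCompl_hSub_orthogonal [FiniteDimensional ℝ L]
    (hB : ∀ x : L, negKilling L x x = 0 → x = 0)
    (horth : ∀ x ∈ k, ∀ y ∈ k1, negKilling L x y = 0) (hα : α ≠ 0) (hαβ : α + β ≠ 0) :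
    IsCompl (hSub k k1) ((hSub k k1).orthogonalBilin (qForm k α β)) :=
  (LinearMap.BilinForm.isCompl_orthogonal_iff_disjoint qForm_isRefl).2 <|
    disjoint_hSub_orthogonal hB horth hα hαβ

theorem exists_mOne_of_mem_orthogonal_hSub [FiniteDimensional ℝ L]
    (hB : ∀ x : L, negKilling L x x = 0 → x = 0)
    (horth : ∀ x ∈ k, ∀ y ∈ k1, negKilling L x y = 0) (hα : α ≠ 0) {w : L × k}
    (hw : w ∈ (hSub k k1).orthogonalBilin (qForm k α β)) :
    ∃ U ∈ mOne k k1, w.1 = U + (-β / α) • (w.2 : L) := by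
  obtain ⟨a, ha, X₀, W₀, hdec⟩ := exists_eq_mOne_add (k := k) (k1 := k1) hB w.1
  have hW₀ : (W₀ : L) = 0 := by
    have h := hw ((0 : k) + (W₀ : L), 0) ⟨0, W₀, rfl⟩
    simp only [qForm_apply, ZeroMemClass.coe_zero, zero_add, map_zero, LinearMap.zero_apply,
      mul_zero, add_zero, hdec, map_add, ha _ (Submodule.mem_sup_right W₀.2)] at h
    rw [negKilling_comm, horth _ X₀.2 _ W₀.2, zero_add] at h
    exact hB _ ((mul_eq_zero.1 h).resolve_left hα)
  have hX₀ : α • (X₀ : L) + β • (w.2 : L) = 0 := by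
    have hXk : ∀ X : k, negKilling L X (α • (X₀ : L) + β • (w.2 : L)) = 0 := fun X => by
      have h := hw ((X : L) + (0 : k1), X) ⟨X, 0, rfl⟩
      simpa [qForm_apply, hdec, hW₀, ha _ (Submodule.mem_sup_left X.2)] using h
    exact hB _ (hXk (α • X₀ + β • w.2))
  refine ⟨a, ha, ?_⟩
  rw [hdec, hW₀, add_zero, add_right_inj, div_eq_inv_mul, mul_smul, neg_smul,
    ← eq_neg_of_add_eq_zero_left hX₀, inv_smul_smul₀ hα]

theorem qForm_eq_gm_projection [FiniteDimensional ℝ L]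
    (hB : ∀ x : L, negKilling L x x = 0 → x = 0)
    (horth : ∀ x ∈ k, ∀ y ∈ k1, negKilling L x y = 0) {c1 c2 : ℝ} (hc1 : c1 ≠ 0)
    (hd : 4 * c1 - c2 ≠ 0) {gm : L × k → L × k → ℝ}
    (hgm : ∀ U U' : L, U ∈ mOne k k1 → U' ∈ mOne k k1 → ∀ X X' : k,
      gm (U + (X : L), -X) (U' + (X' : L), -X')
        = c1 * negKilling L U U' + c2 * negKilling L (X : L) (X' : L))
    {π : L × k → L × k} (hπ : ∀ w, π w ∈ mSub k k1 ∧ w - π w ∈ hSub k k1) {w w' : L × k}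
    (hw : w ∈ (hSub k k1).orthogonalBilin (qForm k c1 (c1 * c2 / (4 * c1 - c2))))
    (hw' : w' ∈ (hSub k k1).orthogonalBilin (qForm k c1 (c1 * c2 / (4 * c1 - c2)))) :
    qForm k c1 (c1 * c2 / (4 * c1 - c2)) w w' = gm (π w) (π w') := by
  obtain ⟨U, hU, hw1⟩ := exists_mOne_of_mem_orthogonal_hSub hB horth hc1 hw
  obtain ⟨U', hU', hw1'⟩ := exists_mOne_of_mem_orthogonal_hSub hB horth hc1 hw'
  set t := -(c1 * c2 / (4 * c1 - c2)) / c1 with ht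
  have hπw : π w = _ := (congrArg π (Prod.ext hw1 rfl : w = (U + ((t • w.2 : k) : L), w.2))).trans
    (projection_mOne_add hB horth hπ hU _ _)
  have hπw' : π w' = _ :=
    (congrArg π (Prod.ext hw1' rfl : w' = (U' + ((t • w'.2 : k) : L), w'.2))).trans
    (projection_mOne_add hB horth hπ hU' _ _)
  have hUw' : negKilling L U w'.2 = 0 := negKilling_mOne_eq_zero hU (Submodule.mem_sup_left w'.2.2)
  have hwU' : negKilling L w.2 U' = 0 := hU' _ (Submodule.mem_sup_left w.2.2)
  rw [hπw, hπw', hgm _ _ hU hU', qForm_apply, hw1, hw1']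
  have hcoef : c1 * t ^ 2 + c1 * c2 / (4 * c1 - c2) = c2 * (2⁻¹ * (t - 1)) ^ 2 := by
    have h1 : c1 * t = -(c1 * c2 / (4 * c1 - c2)) := by rw [ht, mul_div_cancel₀ _ hc1]
    have h2 : t * (4 * c1 - c2) = -c2 := by
      rw [ht, neg_div, mul_div_assoc, mul_div_cancel_left₀ _ hc1, neg_mul, div_mul_cancel₀ _ hd]
    linear_combination h1 + ((t - 1) / 4) * h2
  simp only [map_add, map_sub, map_smul, LinearMap.add_apply, LinearMap.sub_apply,
    LinearMap.smul_apply, smul_eq_mul, SetLike.val_smul, AddSubgroupClass.coe_sub, hUw', hwU',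
    mul_zero, add_zero, zero_add]
  linear_combination (negKilling L w.2 w'.2) * hcoef

end QForm

section CriticalCase

variable {L : Type*} [LieRing L] [LieAlgebra ℝ L] {k k1 : LieSubalgebra ℝ L}

theorem isCompl_hSub_prod [FiniteDimensional ℝ L] (hB : ∀ x : L, negKilling L x x = 0 → x = 0)
    (horth : ∀ x ∈ k, ∀ y ∈ k1, negKilling L x y = 0) :
    IsCompl (hSub k k1) ((mOne k k1 ⊔ k.toSubmodule).prod (⊥ : Submodule ℝ k)) := by
  constructor
  · rw [Submodule.disjoint_def]
    rintro _ ⟨X, W, rfl⟩ hq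
    obtain ⟨hXW, rfl : X = 0⟩ := Submodule.mem_prod.1 hq
    simp only [ZeroMemClass.coe_zero, zero_add] at hXW
    obtain ⟨a, ha, b, hb, hab⟩ := Submodule.mem_sup.1 hXW
    have hW : (W : L) = 0 := hB _ <| by
      rw [← congrArg (negKilling L W) hab, map_add, ha _ (Submodule.mem_sup_right W.2),
        negKilling_comm, horth _ hb _ W.2, add_zero]
    ext <;> simp [hW]
  · refine codisjoint_iff.2 (eq_top_iff.2 fun w _ => ?_)
    obtain ⟨a, ha, X, W, hdec⟩ := exists_eq_mOne_add (k := k) (k1 := k1) hB (w.1 - w.2)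
    refine Submodule.mem_sup.2 ⟨((w.2 : L) + W, w.2), ⟨w.2, W, rfl⟩, (a + X, 0),
      Submodule.mem_prod.2 ⟨Submodule.add_mem_sup ha X.2, rfl⟩, ?_⟩
    ext
    · rw [sub_eq_iff_eq_add] at hdec
      simp only [Prod.fst_add, hdec]
      abel
    · simp

theorem lie_mem_prod (hcomm : ∀ x ∈ k, ∀ y ∈ k1, ⁅x, y⁆ = (0 : L))
    (hsum : ∀ x y : L, x ∈ k.toSubmodule ⊔ k1.toSubmodule →
      y ∈ k.toSubmodule ⊔ k1.toSubmodule → ⁅x, y⁆ ∈ k.toSubmodule ⊔ k1.toSubmodule)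
    {Z w : L × k} (hZ : Z ∈ hSub k k1)
    (hw : w ∈ (mOne k k1 ⊔ k.toSubmodule).prod (⊥ : Submodule ℝ k)) :
    ⁅Z, w⁆ ∈ (mOne k k1 ⊔ k.toSubmodule).prod (⊥ : Submodule ℝ k) := by
  obtain ⟨X, W, rfl⟩ := hZ
  obtain ⟨hw1, hw2 : w.2 = 0⟩ := Submodule.mem_prod.1 hw
  obtain ⟨a, ha, b, hb, hab⟩ := Submodule.mem_sup.1 hw1
  refine Submodule.mem_prod.2 ⟨?_, show ⁅X, w.2⁆ = 0 by rw [hw2, lie_zero]⟩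
  have hWb : ⁅(W : L), b⁆ = 0 := by rw [← lie_skew, hcomm b hb W W.2, neg_zero]
  change ⁅(X : L) + W, w.1⁆ ∈ _
  rw [← hab, lie_add, add_lie (X : L) W b, hWb, add_zero]
  exact Submodule.add_mem_sup
    (lie_mem_mOne hsum (Submodule.add_mem_sup X.2 W.2) ha) (k.lie_mem X.2 hb)

theorem mul_negKilling_eq_gm_projection (hB : ∀ x : L, negKilling L x x = 0 → x = 0)
    (horth : ∀ x ∈ k, ∀ y ∈ k1, negKilling L x y = 0) {c1 c2 : ℝ} (hc : c2 = 4 * c1)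
    {gm : L × k → L × k → ℝ}
    (hgm : ∀ U U' : L, U ∈ mOne k k1 → U' ∈ mOne k k1 → ∀ X X' : k,
      gm (U + (X : L), -X) (U' + (X' : L), -X')
        = c1 * negKilling L U U' + c2 * negKilling L (X : L) (X' : L))
    {π : L × k → L × k} (hπ : ∀ w, π w ∈ mSub k k1 ∧ w - π w ∈ hSub k k1) {u u' : L}
    (hu : u ∈ mOne k k1 ⊔ k.toSubmodule) (hu' : u' ∈ mOne k k1 ⊔ k.toSubmodule) :
    c1 * negKilling L u u' = gm (π (u, 0)) (π (u', 0)) := by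
  obtain ⟨a, ha, b, hb, rfl⟩ := Submodule.mem_sup.1 hu
  obtain ⟨a', ha', b', hb', rfl⟩ := Submodule.mem_sup.1 hu'
  have hab' : negKilling L a b' = 0 := negKilling_mOne_eq_zero ha (Submodule.mem_sup_left hb')
  have hba' : negKilling L b a' = 0 := ha' _ (Submodule.mem_sup_left hb)
  rw [projection_mOne_add hB horth hπ ha ⟨b, hb⟩ 0, projection_mOne_add hB horth hπ ha' ⟨b', hb'⟩ 0,
    hgm _ _ ha ha']
  simp only [map_add, map_smul, LinearMap.add_apply, LinearMap.smul_apply, smul_eq_mul,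
    SetLike.mk_smul_mk, sub_zero, hab', hba', hc, add_zero, zero_add]
  ring

end CriticalCase

theorem statement1_general
    (hneg : ∀ x : l, x ≠ 0 → killingForm ℝ l x x < 0)
    (k k1 : LieSubalgebra ℝ l)
    (hcomm : ∀ x ∈ k, ∀ y ∈ k1, ⁅x, y⁆ = (0 : l))
    (horth : ∀ x ∈ k, ∀ y ∈ k1, negKilling l x y = 0)
    (hsum : ∀ x y : l, x ∈ k.toSubmodule ⊔ k1.toSubmodule →
      y ∈ k.toSubmodule ⊔ k1.toSubmodule → ⁅x, y⁆ ∈ k.toSubmodule ⊔ k1.toSubmodule)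
    (c1 c2 : ℝ) (hc1 : 0 < c1) (hc2 : 0 < c2)
    (gm : (l × k) → (l × k) → ℝ)
    (hgm : ∀ U U' : l, U ∈ mOne k k1 → U' ∈ mOne k k1 → ∀ X X' : k,
      gm (U + (X : l), -X) (U' + (X' : l), -X')
        = c1 * negKilling l U U' + c2 * negKilling l (X : l) (X' : l))
    (π : (l × k) →ₗ[ℝ] (l × k))
    (hπ : ∀ w : l × k, π w ∈ mSub k k1 ∧ w - π w ∈ hSub k k1) :
    -- (i) the case `c2 ≠ 4 c1`
    (c2 ≠ 4 * c1 →
      let α := c1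
      let β := c1 * c2 / (4 * c1 - c2)
      α ≠ 0 ∧ β ≠ 0 ∧
      (∀ z w v : l × k, qForm k α β ⁅z, w⁆ v + qForm k α β w ⁅z, v⁆ = 0) ∧
      (∀ w : l × k, (∀ v : l × k, qForm k α β w v = 0) → w = 0) ∧
      (hSub k k1 ⊓ (hSub k k1).orthogonalBilin (qForm k α β) = ⊥ ∧
        hSub k k1 ⊔ (hSub k k1).orthogonalBilin (qForm k α β) = ⊤) ∧
      (∀ w ∈ (hSub k k1).orthogonalBilin (qForm k α β), π w ∈ mSub k k1) ∧
      (∀ w ∈ (hSub k k1).orthogonalBilin (qForm k α β),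
        ∀ w' ∈ (hSub k k1).orthogonalBilin (qForm k α β), π w = π w' → w = w') ∧
      (∀ v ∈ mSub k k1, ∃ w ∈ (hSub k k1).orthogonalBilin (qForm k α β), π w = v) ∧
      (∀ w ∈ (hSub k k1).orthogonalBilin (qForm k α β),
        ∀ w' ∈ (hSub k k1).orthogonalBilin (qForm k α β),
          qForm k α β w w' = gm (π w) (π w'))) ∧
    -- (ii) the case `c2 = 4 c1`
    (c2 = 4 * c1 →
      let q : Submodule ℝ (l × k) := (mOne k k1 ⊔ k.toSubmodule).prod (⊥ : Submodule ℝ k)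
      (hSub k k1 ⊓ q = ⊥ ∧ hSub k k1 ⊔ q = ⊤) ∧
      (∀ Z ∈ hSub k k1, ∀ w ∈ q, ⁅Z, w⁆ ∈ q) ∧
      (∀ w ∈ q, π w ∈ mSub k k1) ∧
      (∀ w ∈ q, ∀ w' ∈ q, π w = π w' → w = w') ∧
      (∀ v ∈ mSub k k1, ∃ w ∈ q, π w = v) ∧
      (∀ u u' : l, u ∈ mOne k k1 ⊔ k.toSubmodule → u' ∈ mOne k k1 ⊔ k.toSubmodule →
        c1 * negKilling l u u' = gm (π (u, 0)) (π (u', 0)))) := by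
  have hB : ∀ x : l, negKilling l x x = 0 → x = 0 :=
    fun _ => eq_zero_of_negKilling_self_eq_zero hneg
  have hHM := disjoint_hSub_mSub hB horth
  refine ⟨fun hne => ?_, fun hc => ?_⟩
  · have hd : 4 * c1 - c2 ≠ 0 := sub_ne_zero.2 hne.symm
    have hβ : c1 * c2 / (4 * c1 - c2) ≠ 0 := div_ne_zero (mul_ne_zero hc1.ne' hc2.ne') hd
    have hαβ : c1 + c1 * c2 / (4 * c1 - c2) ≠ 0 := by
      rw [add_div' _ _ _ hd]
      exact div_ne_zero (by ring_nf; positivity) hd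
    have hC := isCompl_hSub_orthogonal hB horth hc1.ne' hαβ
    obtain ⟨hmaps, hinj, hsurj⟩ := projection_bijOn_of_isCompl hπ hHM hC
    exact ⟨hc1.ne', hβ, qForm_lie_apply_add, qForm_nondegenerate hB hc1.ne' hβ,
      ⟨hC.inf_eq_bot, hC.sup_eq_top⟩, hmaps, hinj, hsurj,
      fun w hw w' hw' => qForm_eq_gm_projection hB horth hc1.ne' hd hgm hπ hw hw'⟩
  · have hC := isCompl_hSub_prod (k1 := k1) hB horth
    obtain ⟨hmaps, hinj, hsurj⟩ := projection_bijOn_of_isCompl hπ hHM hC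
    exact ⟨⟨hC.inf_eq_bot, hC.sup_eq_top⟩, fun Z hZ w hw => lie_mem_prod hcomm hsum hZ hw,
      hmaps, hinj, hsurj,
      fun u u' hu hu' => mul_negKilling_eq_gm_projection hB horth hc hgm hπ hu hu'⟩

set_option linter.unusedSectionVars false in
set_option linter.unusedVariables false in
/-- parts (i) and (ii). -/
theorem statement1 (hsimple : LieAlgebra.IsSimple ℝ l)
    (hneg : ∀ x : l, x ≠ 0 → killingForm ℝ l x x < 0)
    (k k1 : LieSubalgebra ℝ l)
    (hcomm : ∀ x ∈ k, ∀ y ∈ k1, ⁅x, y⁆ = (0 : l))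
    (horth : ∀ x ∈ k, ∀ y ∈ k1, negKilling l x y = 0)
    (hdisj : k.toSubmodule ⊓ k1.toSubmodule = ⊥)
    (hsum : ∀ x y : l, x ∈ k.toSubmodule ⊔ k1.toSubmodule →
      y ∈ k.toSubmodule ⊔ k1.toSubmodule → ⁅x, y⁆ ∈ k.toSubmodule ⊔ k1.toSubmodule)
    (c1 c2 : ℝ) (hc1 : 0 < c1) (hc2 : 0 < c2)
    (gm : (l × k) → (l × k) → ℝ)
    (hgm : ∀ U U' : l, U ∈ mOne k k1 → U' ∈ mOne k k1 → ∀ X X' : k,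
      gm (U + (X : l), -X) (U' + (X' : l), -X')
        = c1 * negKilling l U U' + c2 * negKilling l (X : l) (X' : l))
    (π : (l × k) →ₗ[ℝ] (l × k))
    (hπ : ∀ w : l × k, π w ∈ mSub k k1 ∧ w - π w ∈ hSub k k1) :
    -- (i) the case `c2 ≠ 4 c1`
    (c2 ≠ 4 * c1 →
      let α := c1
      let β := c1 * c2 / (4 * c1 - c2)
      α ≠ 0 ∧ β ≠ 0 ∧
      (∀ z w v : l × k, qForm k α β ⁅z, w⁆ v + qForm k α β w ⁅z, v⁆ = 0) ∧
      (∀ w : l × k, (∀ v : l × k, qForm k α β w v = 0) → w = 0) ∧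
      (hSub k k1 ⊓ (hSub k k1).orthogonalBilin (qForm k α β) = ⊥ ∧
        hSub k k1 ⊔ (hSub k k1).orthogonalBilin (qForm k α β) = ⊤) ∧
      (∀ w ∈ (hSub k k1).orthogonalBilin (qForm k α β), π w ∈ mSub k k1) ∧
      (∀ w ∈ (hSub k k1).orthogonalBilin (qForm k α β),
        ∀ w' ∈ (hSub k k1).orthogonalBilin (qForm k α β), π w = π w' → w = w') ∧
      (∀ v ∈ mSub k k1, ∃ w ∈ (hSub k k1).orthogonalBilin (qForm k α β), π w = v) ∧
      (∀ w ∈ (hSub k k1).orthogonalBilin (qForm k α β),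
        ∀ w' ∈ (hSub k k1).orthogonalBilin (qForm k α β),
          qForm k α β w w' = gm (π w) (π w'))) ∧
    -- (ii) the case `c2 = 4 c1`
    (c2 = 4 * c1 →
      let q : Submodule ℝ (l × k) := (mOne k k1 ⊔ k.toSubmodule).prod (⊥ : Submodule ℝ k)
      (hSub k k1 ⊓ q = ⊥ ∧ hSub k k1 ⊔ q = ⊤) ∧
      (∀ Z ∈ hSub k k1, ∀ w ∈ q, ⁅Z, w⁆ ∈ q) ∧
      (∀ w ∈ q, π w ∈ mSub k k1) ∧
      (∀ w ∈ q, ∀ w' ∈ q, π w = π w' → w = w') ∧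
      (∀ v ∈ mSub k k1, ∃ w ∈ q, π w = v) ∧
      (∀ u u' : l, u ∈ mOne k k1 ⊔ k.toSubmodule → u' ∈ mOne k k1 ⊔ k.toSubmodule →
        c1 * negKilling l u u' = gm (π (u, 0)) (π (u', 0)))) :=
  statement1_general hneg k k1 hcomm horth hsum c1 c2 hc1 hc2 gm hgm π hπ
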